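/- arXiv:1802.03622 — 2 statements merged into one kernel-verified Lean document; each statement's English description precedes it below -/
import Mathlib

section
/- Let f be a 2π-periodic continuous complex-valued function with Fourier coefficients a_k, and let c_n[f] be the n×n optimal circulant preconditioner with first-column entries c_k = ((n−k)a_k + k a_{k−n})/n for 0 ≤ k < n. Then ‖c_n[f]‖₂ ≤ 2‖f‖_∞ for all n ≥ 1. -/
open scoped BigOperators

noncomputable section

/-- The operator 2-norm (spectral norm) of a complex matrix. -/
def spec {n : ℕ} (A : Matrix (Fin n) (Fin n) ℂ) : ℝ :=
  ‖(Matrix.toEuclideanCLM (𝕜 := ℂ) A : EuclideanSpace ℂ (Fin n) →L[ℂ] EuclideanSpace ℂ (Fin n))‖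

/-- The matrix exponential. -/
def mexp {n : ℕ} (A : Matrix (Fin n) (Fin n) ℂ) : Matrix (Fin n) (Fin n) ℂ :=
  NormedSpace.exp A

/-- The matrix sine, sin A = (e^{iA} - e^{-iA})/(2i). -/
def msin {n : ℕ} (A : Matrix (Fin n) (Fin n) ℂ) : Matrix (Fin n) (Fin n) ℂ :=
  (2 * Complex.I)⁻¹ • (mexp (Complex.I • A) - mexp ((-Complex.I) • A))

/-- The matrix cosine, cos A = (e^{iA} + e^{-iA})/2. -/
def mcos {n : ℕ} (A : Matrix (Fin n) (Fin n) ℂ) : Matrix (Fin n) (Fin n) ℂ :=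
  (2 : ℂ)⁻¹ • (mexp (Complex.I • A) + mexp ((-Complex.I) • A))

/-- A vector norm on ℂⁿ. -/
structure VectorNorm (n : ℕ) where
  V : (Fin n → ℂ) → ℝ
  nonneg : ∀ x, 0 ≤ V x
  eq_zero_iff : ∀ x, V x = 0 ↔ x = 0
  triangle : ∀ x y, V (x + y) ≤ V x + V y
  homog : ∀ (c : ℂ) x, V (c • x) = ‖c‖ * V x

/-- The subordinate (operator) matrix norm induced by a vector norm:
    ‖A‖ = sup_{x ≠ 0} ‖Ax‖/‖x‖. -/
def VectorNorm.opNorm {n : ℕ} (N : VectorNorm n) (A : Matrix (Fin n) (Fin n) ℂ) : ℝ :=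
  sSup {r | ∃ x, x ≠ 0 ∧ r = N.V (A.mulVec x) / N.V x}

/-- A consistent (submultiplicative) matrix norm. -/
structure ConsistentNorm (n : ℕ) where
  ν : Matrix (Fin n) (Fin n) ℂ → ℝ
  nonneg : ∀ A, 0 ≤ ν A
  eq_zero_iff : ∀ A, ν A = 0 ↔ A = 0
  triangle : ∀ A B, ν (A + B) ≤ ν A + ν B
  homog : ∀ (c : ℂ) A, ν (c • A) = ‖c‖ * ν A
  submul : ∀ A B, ν (A * B) ≤ ν A * ν B

/-- Fourier coefficient a_k = (1/2π) ∫_{-π}^{π} f(θ) e^{-ikθ} dθ. -/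
def fourierCoeff' (f : ℝ → ℂ) (k : ℤ) : ℂ :=
  (1 / (2 * (Real.pi : ℂ))) * ∫ θ in (-Real.pi)..Real.pi, f θ * Complex.exp (-Complex.I * k * θ)

/-- The n×n Toeplitz matrix generated by f, with (j,k)-entry a_{j-k}. -/
def toeplitz (f : ℝ → ℂ) (n : ℕ) : Matrix (Fin n) (Fin n) ℂ :=
  fun j k => fourierCoeff' f ((j : ℤ) - (k : ℤ))

/-- The optimal circulant preconditioner of A_n[f], with first-column entries
    c_k = ((n-k)a_k + k a_{k-n})/n. -/
def optCirculant (f : ℝ → ℂ) (n : ℕ) : Matrix (Fin n) (Fin n) ℂ :=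
  Matrix.circulant (fun k : Fin n =>
    (((n : ℂ) - ((k : ℕ) : ℂ)) * fourierCoeff' f ((k : ℕ) : ℤ)
      + ((k : ℕ) : ℂ) * fourierCoeff' f (((k : ℕ) : ℤ) - (n : ℤ))) / (n : ℂ))

/-- The supremum norm of f over [-π, π]. -/
def supNorm (f : ℝ → ℂ) : ℝ :=
  ⨆ θ : Set.Icc (-Real.pi) Real.pi, ‖f (θ : ℝ)‖

/-- The unitary Fourier matrix, F_{jk} = (1/√n) e^{-2πi jk/n}. -/
def fourierMatrix (n : ℕ) : Matrix (Fin n) (Fin n) ℂ :=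
  fun j k => ((1 / Real.sqrt n : ℝ) : ℂ) *
    Complex.exp (-2 * (Real.pi : ℂ) * Complex.I * ((j : ℕ) : ℂ) * ((k : ℕ) : ℂ) / (n : ℂ))

/-!
The optimal circulant preconditioner is diagonalized by the characters `ψ` of `ℤ/n`, which
(normalized) form an orthonormal basis of `ℂⁿ`; so its spectral norm is the largest modulus of
its eigenvalues `∑ₖ cₖ ψ(-k)`. Grouping the pairs `(p, q)` of indices by `p - q mod n` produces
exactly the weights `n - k` and `k` of `cₖ`, whence the eigenvalue at `ψ` is the Rayleigh quotient
`ψ* Tₙ[f] ψ / n` of the Toeplitz matrix. Finally `x* Tₙ[f] x = (1/2π) ∫ f |∑ x_q e^{iqθ}|²` and the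
trigonometric polynomial has `L²` mass `2π ‖x‖²`, so every Rayleigh quotient, hence every
eigenvalue, is bounded by `‖f‖_∞ ≤ 2 ‖f‖_∞`.
-/

open Finset Complex Matrix
open scoped ComplexConjugate Real

section EigenBasis

variable {ι 𝕜 E : Type*} [Fintype ι] [RCLike 𝕜] [NormedAddCommGroup E] [InnerProductSpace 𝕜 E]

theorem OrthonormalBasis.repr_apply_eq_smul (b : OrthonormalBasis ι 𝕜 E) {T : E →L[𝕜] E}
    {μ : ι → 𝕜} (hT : ∀ i, T (b i) = μ i • b i) (x : E) (i : ι) :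
    b.repr (T x) i = μ i * b.repr x i := by
  classical
  conv_lhs => rw [← b.sum_repr x]
  simp [map_sum, hT, smul_smul, b.repr_self, Pi.single_apply, mul_comm]

theorem OrthonormalBasis.opNorm_le_of_apply_eq_smul (b : OrthonormalBasis ι 𝕜 E) {T : E →L[𝕜] E}
    {μ : ι → 𝕜} (hT : ∀ i, T (b i) = μ i • b i) {R : ℝ} (hR : 0 ≤ R) (hμ : ∀ i, ‖μ i‖ ≤ R) :
    ‖T‖ ≤ R := by
  refine T.opNorm_le_bound hR fun x => ?_
  rw [← b.repr.norm_map (T x), ← b.repr.norm_map x]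
  refine le_of_sq_le_sq ?_ (by positivity)
  rw [mul_pow, EuclideanSpace.norm_sq_eq, EuclideanSpace.norm_sq_eq, mul_sum]
  refine sum_le_sum fun i _ => ?_
  rw [b.repr_apply_eq_smul hT, norm_mul, mul_pow]
  gcongr
  exact hμ i

end EigenBasis

namespace AddChar

variable {G : Type*} [AddCommGroup G] [Fintype G]

theorem orthonormal_euclidean :
    Orthonormal ℂ fun ψ : AddChar G ℂ => ((√(Fintype.card G))⁻¹ : ℂ) • WithLp.toLp 2 ⇑ψ := by
  rw [orthonormal_iff_ite]
  intro ψ₁ ψ₂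
  have h := wInner_cWeight_eq_boole ψ₁ ψ₂
  rw [RCLike.wInner_cWeight_eq_smul_wInner_one] at h
  rw [inner_smul_left, inner_smul_right, ← RCLike.wInner_one_eq_inner, ← h, map_inv₀,
    conj_ofReal, ← mul_assoc, ← mul_inv, ← ofReal_mul, Real.mul_self_sqrt (Nat.cast_nonneg _)]
  simp [NNRat.smul_def]

def euclideanBasis : OrthonormalBasis (AddChar G ℂ) ℂ (EuclideanSpace ℂ G) :=
  (basisOfOrthonormalOfCardEqFinrank orthonormal_euclidean (by simp)).toOrthonormalBasis
    (by rw [coe_basisOfOrthonormalOfCardEqFinrank]; exact orthonormal_euclidean)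

theorem euclideanBasis_apply (ψ : AddChar G ℂ) :
    euclideanBasis ψ = ((√(Fintype.card G))⁻¹ : ℂ) • WithLp.toLp 2 ⇑ψ := by
  simp [euclideanBasis]

end AddChar

theorem Matrix.circulant_mulVec_addChar {G R : Type*} [AddCommGroup G] [Fintype G] [CommRing R]
    (c : G → R) (ψ : AddChar G R) :
    circulant c *ᵥ ⇑ψ = (∑ k, c k * ψ (-k)) • ⇑ψ := by
  ext p
  simp only [mulVec, dotProduct, circulant_apply, Pi.smul_apply, smul_eq_mul, sum_mul]
  refine Fintype.sum_equiv (Equiv.subLeft p) _ _ fun q => ?_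
  simp [mul_assoc, ← AddChar.map_add_eq_mul, sub_eq_add_neg, add_comm]

theorem Matrix.norm_toEuclideanCLM_circulant_le {G : Type*} [AddCommGroup G] [Fintype G]
    [DecidableEq G] (c : G → ℂ) {R : ℝ} (hR : 0 ≤ R)
    (h : ∀ ψ : AddChar G ℂ, ‖∑ k, c k * ψ (-k)‖ ≤ R) :
    ‖toEuclideanCLM (𝕜 := ℂ) (circulant c)‖ ≤ R := by
  refine AddChar.euclideanBasis.opNorm_le_of_apply_eq_smul (fun ψ => ?_) hR h
  rw [AddChar.euclideanBasis_apply, map_smul, toEuclideanCLM_toLp, circulant_mulVec_addChar,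
    WithLp.toLp_smul, smul_comm]

theorem Fin.sum_val_add_sub_val {R : Type*} [Ring R] {n : ℕ} (g : ℤ → R) (k : Fin n) :
    ∑ q : Fin n, g (((q + k : Fin n) : ℕ) - (q : ℕ))
      = ((n : R) - k) * g k + k * g (k - n) := by
  have hk := k.isLt
  have hdiff : ∀ q : Fin n, (((q + k : Fin n) : ℕ) : ℤ) - (q : ℕ)
      = if (q : ℕ) + k < n then (k : ℤ) else k - n := by
    intro q
    rw [Fin.val_add_eq_ite]
    split_ifs <;> omega
  simp only [hdiff, apply_ite g]
  rw [Fin.sum_univ_eq_sum_range (fun q => if q + k < n then g k else g (k - n)),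
    ← sum_range_add_sum_Ico _ (Nat.sub_le n k),
    sum_congr rfl fun q hq => if_pos (by rw [mem_range] at hq; omega),
    sum_congr rfl fun q hq => if_neg (by rw [mem_Ico] at hq; omega)]
  simp [Nat.cast_sub hk.le]

theorem Fin.sum_sum_sub_eq {R : Type*} [Ring R] {n : ℕ} [NeZero n] (F : Fin n → ℤ → R) :
    ∑ p : Fin n, ∑ q : Fin n, F (p - q) ((p : ℕ) - (q : ℕ))
      = ∑ k : Fin n, (((n : R) - k) * F k k + k * F k (k - n)) := by
  rw [sum_comm]
  calc ∑ q : Fin n, ∑ p : Fin n, F (p - q) ((p : ℕ) - (q : ℕ))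
      = ∑ q : Fin n, ∑ k : Fin n, F k (((q + k : Fin n) : ℕ) - (q : ℕ)) :=
        sum_congr rfl fun q _ =>
          (Fintype.sum_equiv (Equiv.addLeft q) _ _ fun k => by simp).symm
    _ = _ := by
        rw [sum_comm]
        exact sum_congr rfl fun k _ => Fin.sum_val_add_sub_val (F k) k

theorem supNorm_nonneg (f : ℝ → ℂ) : 0 ≤ supNorm f :=
  Real.iSup_nonneg fun _ => norm_nonneg _

theorem norm_le_supNorm {f : ℝ → ℂ} (hf : Continuous f) {θ : ℝ}
    (hθ : θ ∈ Set.Icc (-π) π) : ‖f θ‖ ≤ supNorm f :=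
  le_ciSup (f := fun t : Set.Icc (-π) π => ‖f t‖)
    (isCompact_range (by fun_prop)).bddAbove ⟨θ, hθ⟩

theorem integral_exp_int_mul_I_eq_zero {m : ℤ} (hm : m ≠ 0) :
    ∫ θ in -π..π, exp (m * θ * I) = 0 := by
  have hm' : (m : ℝ) ≠ 0 := by exact_mod_cast hm
  have := intervalIntegral.integral_comp_mul_left (fun t : ℝ => exp (t * I)) hm'
    (a := -π) (b := π)
  simp only [ofReal_mul, ofReal_intCast, mul_neg] at this
  rw [this, integral_exp_mul_I_eq_sin, Real.sin_int_mul_pi]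
  simp

theorem fourierCoeff'_one (m : ℤ) : fourierCoeff' (fun _ => 1) m = if m = 0 then 1 else 0 := by
  split_ifs with hm
  · subst hm
    simp only [fourierCoeff', Int.cast_zero, mul_zero, zero_mul, exp_zero, mul_one,
      intervalIntegral.integral_const, sub_neg_eq_add, real_smul]
    push_cast
    field_simp
    ring
  · rw [fourierCoeff', ← mul_zero (1 / (2 * (π : ℂ))),
      ← integral_exp_int_mul_I_eq_zero (neg_ne_zero.2 hm)]
    simp only [one_mul, Int.cast_neg]
    ring_nf

theorem toeplitz_one (n : ℕ) : toeplitz (fun _ => 1) n = 1 := by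
  ext j k
  simp only [toeplitz, fourierCoeff'_one, sub_eq_zero, Nat.cast_inj, Fin.val_inj, one_apply]

def trigPoly {n : ℕ} (x : Fin n → ℂ) (θ : ℝ) : ℂ :=
  ∑ q, x q * exp (I * (q : ℕ) * θ)

theorem star_mul_toeplitz_mul {f : ℝ → ℂ} {n : ℕ} (x : Fin n → ℂ) (p q : Fin n) :
    star (x p) * (toeplitz f n p q * x q) = 1 / (2 * π) * ∫ θ in -π..π,
      f θ * (conj (x p * exp (I * (p : ℕ) * θ)) * (x q * exp (I * (q : ℕ) * θ))) := by
  have hintegrand : ∀ θ : ℝ,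
      f θ * (conj (x p * exp (I * (p : ℕ) * θ)) * (x q * exp (I * (q : ℕ) * θ)))
        = (star (x p) * x q) * (f θ * exp (-I * (((p : ℤ) - (q : ℤ) : ℤ) : ℂ) * θ)) := by
    intro θ
    have hexp : conj (exp (I * (p : ℕ) * θ)) * exp (I * (q : ℕ) * θ)
        = exp (-I * (((p : ℤ) - (q : ℤ) : ℤ) : ℂ) * θ) := by
      rw [← Complex.exp_conj, ← exp_add]
      simp only [map_mul, conj_I, conj_natCast, conj_ofReal]
      push_cast
      ring_nf
    rw [map_mul, ← hexp, Complex.star_def]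
    ring
  rw [intervalIntegral.integral_congr fun θ _ => hintegrand θ,
    intervalIntegral.integral_const_mul, toeplitz, fourierCoeff']
  ring

theorem star_dotProduct_toeplitz_mulVec {f : ℝ → ℂ} (hf : Continuous f) {n : ℕ}
    (x : Fin n → ℂ) :
    star x ⬝ᵥ (toeplitz f n *ᵥ x) =
      1 / (2 * π) * ∫ θ in -π..π, f θ * (‖trigPoly x θ‖ ^ 2 : ℝ) := by
  calc star x ⬝ᵥ (toeplitz f n *ᵥ x)
      = ∑ p, ∑ q, star (x p) * (toeplitz f n p q * x q) := by
        simp only [dotProduct, mulVec, Pi.star_apply, mul_sum]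
    _ = 1 / (2 * π) * ∫ θ in -π..π, ∑ p, ∑ q,
          f θ * (conj (x p * exp (I * (p : ℕ) * θ)) * (x q * exp (I * (q : ℕ) * θ))) := by
        rw [intervalIntegral.integral_finsetSum fun p _ =>
          (by fun_prop : Continuous _).intervalIntegrable _ _, mul_sum]
        refine sum_congr rfl fun p _ => ?_
        rw [intervalIntegral.integral_finsetSum fun q _ =>
          (by fun_prop : Continuous _).intervalIntegrable _ _, mul_sum]
        exact sum_congr rfl fun q _ => star_mul_toeplitz_mul x p q
    _ = _ := by
        congr 1
        refine intervalIntegral.integral_congr fun θ _ => ?_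
        simp only [← mul_sum, ← sum_mul, ← map_sum, trigPoly, conj_mul']
        push_cast
        rfl

theorem integral_norm_trigPoly_sq {n : ℕ} (x : Fin n → ℂ) :
    ∫ θ in -π..π, ‖trigPoly x θ‖ ^ 2 = 2 * π * ∑ q, ‖x q‖ ^ 2 := by
  -- Parseval for trigonometric polynomials is the case `f = 1`, where `Tₙ[f]` is the identity.
  have h := star_dotProduct_toeplitz_mulVec (f := fun _ => 1) continuous_const x
  simp only [toeplitz_one, one_mulVec, one_mul, intervalIntegral.integral_ofReal, dotProduct,
    Pi.star_apply, Complex.star_def, conj_mul'] at h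
  have h' : ∑ q, ‖x q‖ ^ 2 = 1 / (2 * π) * ∫ θ in -π..π, ‖trigPoly x θ‖ ^ 2 := by
    exact_mod_cast h
  rw [h']
  field_simp

theorem norm_star_dotProduct_toeplitz_mulVec_le {f : ℝ → ℂ} (hf : Continuous f) {n : ℕ}
    (x : Fin n → ℂ) :
    ‖star x ⬝ᵥ (toeplitz f n *ᵥ x)‖ ≤ supNorm f * ∑ q, ‖x q‖ ^ 2 := by
  have hle : ‖∫ θ in -π..π, f θ * (‖trigPoly x θ‖ ^ 2 : ℝ)‖
      ≤ ∫ θ in -π..π, supNorm f * ‖trigPoly x θ‖ ^ 2 := by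
    refine intervalIntegral.norm_integral_le_of_norm_le (by linarith [Real.pi_pos])
      (.of_forall fun θ hθ => ?_)
      ((by unfold trigPoly; fun_prop : Continuous _).intervalIntegrable _ _)
    rw [norm_mul, norm_real, Real.norm_of_nonneg (by positivity)]
    gcongr
    exact norm_le_supNorm hf (Set.Ioc_subset_Icc_self hθ)
  rw [intervalIntegral.integral_const_mul, integral_norm_trigPoly_sq] at hle
  rw [star_dotProduct_toeplitz_mulVec hf, norm_mul]
  calc ‖(1 / (2 * π) : ℂ)‖ * ‖∫ θ in -π..π, f θ * (‖trigPoly x θ‖ ^ 2 : ℝ)‖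
      ≤ 1 / (2 * π) * (supNorm f * (2 * π * ∑ q, ‖x q‖ ^ 2)) := by
        gcongr
        simp [abs_of_pos Real.pi_pos]
    _ = supNorm f * ∑ q, ‖x q‖ ^ 2 := by
        field_simp

def optCirculantCol (f : ℝ → ℂ) (n : ℕ) (k : Fin n) : ℂ :=
  (((n : ℂ) - ((k : ℕ) : ℂ)) * fourierCoeff' f ((k : ℕ) : ℤ)
    + ((k : ℕ) : ℂ) * fourierCoeff' f (((k : ℕ) : ℤ) - (n : ℤ))) / (n : ℂ)

theorem optCirculant_eq_circulant (f : ℝ → ℂ) (n : ℕ) :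
    optCirculant f n = circulant (optCirculantCol f n) :=
  rfl

theorem sum_optCirculantCol_mul_addChar (f : ℝ → ℂ) {n : ℕ} [NeZero n]
    (ψ : AddChar (Fin n) ℂ) :
    ∑ k, optCirculantCol f n k * ψ (-k)
      = (n : ℂ)⁻¹ * (star ⇑ψ ⬝ᵥ (toeplitz f n *ᵥ ⇑ψ)) := by
  have hquad : star ⇑ψ ⬝ᵥ (toeplitz f n *ᵥ ⇑ψ)
      = ∑ p : Fin n, ∑ q : Fin n, fourierCoeff' f ((p : ℕ) - (q : ℕ)) * ψ (-(p - q)) := by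
    simp only [dotProduct, mulVec, mul_sum]
    refine sum_congr rfl fun p _ => sum_congr rfl fun q _ => ?_
    rw [Pi.star_apply, Complex.star_def, ← AddChar.map_neg_eq_conj, neg_sub,
      ← neg_add_eq_sub p q, AddChar.map_add_eq_mul, toeplitz]
    ring
  rw [hquad, Fin.sum_sum_sub_eq (fun k m => fourierCoeff' f m * ψ (-k)), mul_sum]
  refine sum_congr rfl fun k _ => ?_
  rw [optCirculantCol]
  field_simp

theorem norm_sum_optCirculantCol_mul_addChar_le {f : ℝ → ℂ} (hf : Continuous f) {n : ℕ}
    [NeZero n] (ψ : AddChar (Fin n) ℂ) :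
    ‖∑ k, optCirculantCol f n k * ψ (-k)‖ ≤ supNorm f := by
  have h := norm_star_dotProduct_toeplitz_mulVec_le hf ⇑ψ
  simp only [AddChar.norm_apply, one_pow, sum_const, card_univ, Fintype.card_fin,
    nsmul_eq_mul, mul_one] at h
  have hn : (0 : ℝ) < n := Nat.cast_pos.2 (NeZero.pos n)
  rw [sum_optCirculantCol_mul_addChar, norm_mul, norm_inv, norm_natCast, inv_mul_le_iff₀ hn,
    mul_comm]
  exact h

theorem stmt_4_general (f : ℝ → ℂ) (hf : Continuous f) (n : ℕ) :
    spec (optCirculant f n) ≤ 2 * supNorm f := by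
  have hM := supNorm_nonneg f
  rcases n.eq_zero_or_pos with rfl | hn
  · rw [spec, ContinuousLinearMap.opNorm_subsingleton]
    positivity
  have : NeZero n := ⟨hn.ne'⟩
  calc spec (optCirculant f n)
      ≤ supNorm f := by
        rw [optCirculant_eq_circulant]
        exact norm_toEuclideanCLM_circulant_le _ hM (norm_sum_optCirculantCol_mul_addChar_le hf)
    _ ≤ 2 * supNorm f := by linarith

/-- For 2π-periodic continuous f, the optimal circulant preconditioner satisfies
    ‖c_n[f]‖₂ ≤ 2‖f‖_∞. -/
theorem stmt_4 (f : ℝ → ℂ) (hf : Continuous f)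
    (hper : ∀ θ, f (θ + 2 * Real.pi) = f θ) (n : ℕ) (hn : 1 ≤ n) :
    spec (optCirculant f n) ≤ 2 * supNorm f :=
  stmt_4_general f hf n
end
end

section
/- Let A, B, U, W be n-by-n complex matrices with A − B = U − W, ‖A‖₂ ≤ s and ‖B‖₂ ≤ s. Then for every positive integer K, Σ_{i=1}^{K}(1/i!)(A^i − B^i) = R + J, where R = Σ_{i=1}^{K}(1/i!)Σ_{j=0}^{i−1} A^j U B^{i−1−j} satisfies rank R ≤ K · rank U, and J = −Σ_{i=1}^{K}(1/i!)Σ_{j=0}^{i−1} A^j W B^{i−1−j} satisfies ‖J‖₂ ≤ ‖W‖₂ · e^{s}. -/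
open scoped BigOperators

noncomputable section

/-!
Telescoping gives `A^i - B^i = ∑_{j<i} A^j (U - W) B^(i-1-j)`, which splits the sum into the
`U`-part `R` and the `W`-part `J`. Exchanging the order of summation writes `R` as
`∑_{j<K} A^j U C_j`, a sum of `K` matrices of rank at most `rank U`. Each term of `J` has norm at
most `i s^(i-1) ‖W‖ / i! = s^(i-1) ‖W‖ / (i-1)!`, and these sum to at most `‖W‖ e^s`.
-/

open Finset

theorem pow_sub_pow_eq_sum_pow_mul_sub_mul_pow {R : Type*} [Ring R] (a b : R) (i : ℕ) :
    a ^ i - b ^ i = ∑ j ∈ range i, a ^ j * (a - b) * b ^ (i - 1 - j) := by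
  induction i with
  | zero => simp
  | succ i ih =>
    have hshift : ∀ j ∈ range i,
        a ^ j * (a - b) * b ^ (i + 1 - 1 - j) = a ^ j * (a - b) * b ^ (i - 1 - j) * b := by
      intro j hj
      rw [show i + 1 - 1 - j = i - 1 - j + 1 by grind, pow_succ, mul_assoc _ _ b]
    rw [sum_range_succ, sum_congr rfl hshift, ← sum_mul, ← ih, Nat.add_sub_cancel, Nat.sub_self,
      pow_zero, mul_one, pow_succ, pow_succ]
    noncomm_ring

theorem sum_smul_pow_sub_pow_eq_of_sub_eq_sub {S R : Type*} [Ring R] [Monoid S]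
    [DistribMulAction S R] {a b u w : R} (hdec : a - b = u - w) (c : ℕ → S) (t : Finset ℕ) :
    ∑ i ∈ t, c i • (a ^ i - b ^ i) =
      ∑ i ∈ t, c i • ∑ j ∈ range i, a ^ j * u * b ^ (i - 1 - j) +
        -∑ i ∈ t, c i • ∑ j ∈ range i, a ^ j * w * b ^ (i - 1 - j) := by
  simp only [pow_sub_pow_eq_sum_pow_mul_sub_mul_pow a b, hdec, mul_sub, sub_mul, sum_sub_distrib,
    smul_sub, ← sub_eq_add_neg]

section Rank

variable {m n 𝕜 : Type*} [Fintype n] [Field 𝕜]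

theorem Matrix.rank_add_le (M N : Matrix m n 𝕜) : (M + N).rank ≤ M.rank + N.rank := by
  rw [Matrix.rank, Matrix.rank, Matrix.rank, Matrix.mulVecLin_add]
  have hrange : LinearMap.range (M.mulVecLin + N.mulVecLin) ≤
      LinearMap.range M.mulVecLin ⊔ LinearMap.range N.mulVecLin := by
    rintro x ⟨y, rfl⟩
    exact Submodule.add_mem_sup ⟨y, rfl⟩ ⟨y, rfl⟩
  exact (Submodule.finrank_mono hrange).trans (Submodule.finrank_add_le_finrank_add_finrank _ _)

theorem Matrix.rank_sum_le {ι : Type*} (t : Finset ι) (M : ι → Matrix m n 𝕜) :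
    (∑ i ∈ t, M i).rank ≤ ∑ i ∈ t, (M i).rank :=
  le_sum_of_subadditive (fun N : Matrix m n 𝕜 => N.rank) (Matrix.rank_zero (m := m)).le
    Matrix.rank_add_le t M

theorem Matrix.rank_sum_smul_sum_pow_mul_mul_pow_le [DecidableEq n] (A B U : Matrix n n 𝕜) (c : ℕ → 𝕜) (K : ℕ) :
    (∑ i ∈ Icc 1 K, c i • ∑ j ∈ range i, A ^ j * U * B ^ (i - 1 - j)).rank ≤ K * U.rank := by
  have hswap : ∑ i ∈ Icc 1 K, c i • ∑ j ∈ range i, A ^ j * U * B ^ (i - 1 - j) =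
      ∑ j ∈ range K, A ^ j * (U * ∑ i ∈ Icc (j + 1) K, c i • B ^ (i - 1 - j)) := by
    simp_rw [smul_sum]
    rw [sum_comm' (t' := range K) (s' := fun j => Icc (j + 1) K)
      (by intro i j; simp only [mem_Icc, mem_range]; omega)]
    simp_rw [mul_sum, mul_smul_comm, mul_assoc]
  calc _ ≤ ∑ j ∈ range K, (A ^ j * (U * ∑ i ∈ Icc (j + 1) K, c i • B ^ (i - 1 - j))).rank :=
        hswap ▸ Matrix.rank_sum_le _ _
    _ ≤ ∑ _j ∈ range K, U.rank :=
        sum_le_sum fun j _ => (Matrix.rank_mul_le_right _ _).trans (Matrix.rank_mul_le_left _ _)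
    _ = K * U.rank := by rw [sum_const, card_range, smul_eq_mul]

end Rank

section Norm

variable {R : Type*} [SeminormedRing R]

theorem norm_pow_mul_le (a d : R) (j : ℕ) : ‖a ^ j * d‖ ≤ ‖a‖ ^ j * ‖d‖ := by
  induction j with
  | zero => simp
  | succ j ih =>
    rw [pow_succ', mul_assoc, pow_succ', mul_assoc]
    exact (norm_mul_le _ _).trans (mul_le_mul_of_nonneg_left ih (norm_nonneg a))

theorem norm_mul_pow_le (d b : R) (k : ℕ) : ‖d * b ^ k‖ ≤ ‖d‖ * ‖b‖ ^ k := by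
  induction k with
  | zero => simp
  | succ k ih =>
    rw [pow_succ, ← mul_assoc, pow_succ, ← mul_assoc]
    exact (norm_mul_le _ _).trans (mul_le_mul_of_nonneg_right ih (norm_nonneg b))

theorem norm_sum_pow_mul_mul_pow_le {a b : R} {s : ℝ} (ha : ‖a‖ ≤ s) (hb : ‖b‖ ≤ s)
    (d : R) (i : ℕ) : ‖∑ j ∈ range i, a ^ j * d * b ^ (i - 1 - j)‖ ≤ i * (s ^ (i - 1) * ‖d‖) := by
  have hs : 0 ≤ s := (norm_nonneg a).trans ha
  have hterm : ∀ j ∈ range i, ‖a ^ j * d * b ^ (i - 1 - j)‖ ≤ s ^ (i - 1) * ‖d‖ := by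
    intro j hj
    calc ‖a ^ j * d * b ^ (i - 1 - j)‖ ≤ ‖a‖ ^ j * ‖d‖ * ‖b‖ ^ (i - 1 - j) :=
          (norm_mul_pow_le _ _ _).trans
            (mul_le_mul_of_nonneg_right (norm_pow_mul_le _ _ _) (by positivity))
      _ ≤ s ^ j * ‖d‖ * s ^ (i - 1 - j) := by gcongr
      _ = s ^ (i - 1) * ‖d‖ := by
        rw [mul_right_comm, ← pow_add, Nat.add_sub_cancel' (by grind)]
  calc _ ≤ ∑ j ∈ range i, ‖a ^ j * d * b ^ (i - 1 - j)‖ := norm_sum_le _ _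
    _ ≤ ∑ _j ∈ range i, s ^ (i - 1) * ‖d‖ := sum_le_sum hterm
    _ = i * (s ^ (i - 1) * ‖d‖) := by rw [sum_const, card_range, nsmul_eq_mul]

theorem Real.sum_Icc_mul_pow_div_factorial_le_exp {s : ℝ} (hs : 0 ≤ s) (K : ℕ) :
    ∑ i ∈ Icc 1 K, i * s ^ (i - 1) / i.factorial ≤ Real.exp s := by
  have hshift : ∑ i ∈ Icc 1 K, i * s ^ (i - 1) / i.factorial =
      ∑ m ∈ range K, s ^ m / m.factorial := by
    rw [← Finset.Ico_add_one_right_eq_Icc, sum_Ico_eq_sum_range, Nat.add_sub_cancel]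
    refine sum_congr rfl fun m _ => ?_
    rw [add_comm 1 m, Nat.add_sub_cancel, Nat.factorial_succ, Nat.cast_mul]
    field_simp
  exact hshift ▸ Real.sum_le_exp_of_nonneg hs K

theorem norm_sum_inv_factorial_smul_sum_pow_mul_mul_pow_le {𝕜 : Type*} [RCLike 𝕜]
    [NormedSpace 𝕜 R] {a b : R} {s : ℝ} (ha : ‖a‖ ≤ s) (hb : ‖b‖ ≤ s) (d : R) (K : ℕ) :
    ‖∑ i ∈ Icc 1 K, ((i.factorial : 𝕜))⁻¹ • ∑ j ∈ range i, a ^ j * d * b ^ (i - 1 - j)‖ ≤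
      ‖d‖ * Real.exp s := by
  have hs : 0 ≤ s := (norm_nonneg a).trans ha
  calc _ ≤ ∑ i ∈ Icc 1 K, ‖((i.factorial : 𝕜))⁻¹ • ∑ j ∈ range i, a ^ j * d * b ^ (i - 1 - j)‖ :=
        norm_sum_le _ _
    _ ≤ ∑ i ∈ Icc 1 K, ‖d‖ * (i * s ^ (i - 1) / i.factorial) := by
        refine sum_le_sum fun i _ => ?_
        rw [norm_smul, norm_inv, RCLike.norm_natCast, inv_mul_le_iff₀ (by positivity)]
        calc _ ≤ i * (s ^ (i - 1) * ‖d‖) := norm_sum_pow_mul_mul_pow_le ha hb d i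
          _ = _ := by field_simp
    _ ≤ ‖d‖ * Real.exp s := by
        rw [← mul_sum]
        exact mul_le_mul_of_nonneg_left (Real.sum_Icc_mul_pow_div_factorial_le_exp hs K)
          (norm_nonneg d)

end Norm

section Spectral

open scoped Matrix.Norms.L2Operator

theorem spec_eq_l2_opNorm {n : ℕ} (A : Matrix (Fin n) (Fin n) ℂ) : spec A = ‖A‖ := rfl

theorem spec_neg_sum_inv_factorial_smul_sum_pow_mul_mul_pow_le {n : ℕ}
    {A B : Matrix (Fin n) (Fin n) ℂ} {s : ℝ} (hA : spec A ≤ s) (hB : spec B ≤ s)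
    (W : Matrix (Fin n) (Fin n) ℂ) (K : ℕ) :
    spec (-∑ i ∈ Icc 1 K, ((i.factorial : ℂ))⁻¹ •
        ∑ j ∈ range i, A ^ j * W * B ^ (i - 1 - j)) ≤ spec W * Real.exp s := by
  rw [spec_eq_l2_opNorm] at hA hB
  rw [spec_eq_l2_opNorm, spec_eq_l2_opNorm, norm_neg]
  exact norm_sum_inv_factorial_smul_sum_pow_mul_mul_pow_le hA hB W K

end Spectral

theorem stmt_19_general (n : ℕ) (A B U W : Matrix (Fin n) (Fin n) ℂ) (s : ℝ)
    (hdec : A - B = U - W) (hA : spec A ≤ s) (hB : spec B ≤ s) (K : ℕ) :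
    (∑ i ∈ Finset.Icc 1 K, ((i.factorial : ℂ))⁻¹ • (A ^ i - B ^ i)) =
      (∑ i ∈ Finset.Icc 1 K, ((i.factorial : ℂ))⁻¹ •
        ∑ j ∈ Finset.range i, A ^ j * U * B ^ (i - 1 - j)) +
      (-(∑ i ∈ Finset.Icc 1 K, ((i.factorial : ℂ))⁻¹ •
        ∑ j ∈ Finset.range i, A ^ j * W * B ^ (i - 1 - j))) ∧
    (∑ i ∈ Finset.Icc 1 K, ((i.factorial : ℂ))⁻¹ •
        ∑ j ∈ Finset.range i, A ^ j * U * B ^ (i - 1 - j)).rank ≤ K * U.rank ∧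
    spec (-(∑ i ∈ Finset.Icc 1 K, ((i.factorial : ℂ))⁻¹ •
        ∑ j ∈ Finset.range i, A ^ j * W * B ^ (i - 1 - j))) ≤ spec W * Real.exp s :=
  ⟨sum_smul_pow_sub_pow_eq_of_sub_eq_sub hdec _ _,
    Matrix.rank_sum_smul_sum_pow_mul_mul_pow_le A B U _ K,
    spec_neg_sum_inv_factorial_smul_sum_pow_mul_mul_pow_le hA hB W K⟩

/-- If A − B = U − W with ‖A‖₂ ≤ s and ‖B‖₂ ≤ s, then for every K ≥ 1,
    Σ_{i=1}^{K}(1/i!)(A^i − B^i) = R + J where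
    R = Σ_{i=1}^{K}(1/i!)Σ_{j=0}^{i−1} A^j U B^{i−1−j} has rank R ≤ K · rank U and
    J = −Σ_{i=1}^{K}(1/i!)Σ_{j=0}^{i−1} A^j W B^{i−1−j} has ‖J‖₂ ≤ ‖W‖₂ e^s. -/
theorem stmt_19 (n : ℕ) (A B U W : Matrix (Fin n) (Fin n) ℂ) (s : ℝ)
    (hdec : A - B = U - W) (hA : spec A ≤ s) (hB : spec B ≤ s) (K : ℕ) (hK : 0 < K) :
    (∑ i ∈ Finset.Icc 1 K, ((i.factorial : ℂ))⁻¹ • (A ^ i - B ^ i)) =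
      (∑ i ∈ Finset.Icc 1 K, ((i.factorial : ℂ))⁻¹ •
        ∑ j ∈ Finset.range i, A ^ j * U * B ^ (i - 1 - j)) +
      (-(∑ i ∈ Finset.Icc 1 K, ((i.factorial : ℂ))⁻¹ •
        ∑ j ∈ Finset.range i, A ^ j * W * B ^ (i - 1 - j))) ∧
    (∑ i ∈ Finset.Icc 1 K, ((i.factorial : ℂ))⁻¹ •
        ∑ j ∈ Finset.range i, A ^ j * U * B ^ (i - 1 - j)).rank ≤ K * U.rank ∧
    spec (-(∑ i ∈ Finset.Icc 1 K, ((i.factorial : ℂ))⁻¹ •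
        ∑ j ∈ Finset.range i, A ^ j * W * B ^ (i - 1 - j))) ≤ spec W * Real.exp s :=
  stmt_19_general n A B U W s hdec hA hB K
end
end
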